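/- Fix γ > 0 and 1 ≤ p ≤ ∞. The differential operator d/dx is chaotic in the sense of Devaney on the metric space (E, ρ_p): the set of periodic points of d/dx in E is dense in (E, ρ_p), and d/dx is topologically transitive on (E, ρ_p). -/

import Mathlib

open MeasureTheory Set Filter
open scoped ENNReal Topology

/-- The `L^p` distance of two functions over the interval `[a, b]`. -/
noncomputable def rho (a b : ℝ) (p : ℝ≥0∞) (f g : ℝ → ℝ) : ℝ :=
  (eLpNorm (fun x => f x - g x) p (volume.restrict (Icc a b))).toReal

/-- A sequence taking values in `{0, 1}`. -/
def IsBinary (a : ℕ → ℝ) : Prop := ∀ n, a n = 0 ∨ a n = 1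

/-- The set `E` of smooth functions of the form `Σ aₙ/n! xⁿ` with binary coefficients. -/
def Esp : Set (ℝ → ℝ) :=
  {f | ContDiff ℝ (⊤ : ℕ∞) f ∧ ∃ a : ℕ → ℝ, IsBinary a ∧
    ∀ x : ℝ, HasSum (fun n : ℕ => a n / (Nat.factorial n : ℝ) * x ^ n) (f x)}

/-!
Every `f ∈ E` is the exponential generating function `egf a` of its binary coefficient sequence
`a`, and `d/dx` acts on `E` as the left shift of `a`. If two binary sequences agree below `N`,
their generating functions differ on `[s, t]` uniformly by at most the exponential tail
`∑_{n ≥ N} Rⁿ / n!` with `R = max |s| |t|`, hence by little in every `L^p`. So `f` is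
approximated by the periodic point obtained by repeating its first `N + 1` coefficients, and the
sequence that starts with the first `N` coefficients of `f` and continues with those of `g` is
close to `f` and is mapped onto `g` by `N` derivatives.
-/

open scoped Nat

noncomputable def egf (a : ℕ → ℝ) (x : ℝ) : ℝ :=
  ∑' n, a n / n ! * x ^ n

section egf

variable {a b : ℕ → ℝ} {C D : ℝ}

lemma norm_egf_term_le (ha : ∀ n, |a n| ≤ C) {x R : ℝ} (hx : |x| ≤ R) (n : ℕ) :
    ‖a n / n ! * x ^ n‖ ≤ C * (R ^ n / n !) := by
  rw [Real.norm_eq_abs, abs_mul, abs_div, abs_pow, Nat.abs_cast, div_mul_eq_mul_div,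
    mul_div_assoc]
  gcongr
  · exact (abs_nonneg _).trans (ha 0)
  · exact ha n

lemma summable_egf_term (ha : ∀ n, |a n| ≤ C) (x : ℝ) :
    Summable fun n => a n / n ! * x ^ n :=
  .of_norm_bounded ((Real.summable_pow_div_factorial |x|).mul_left C)
    (norm_egf_term_le ha le_rfl)

lemma hasSum_egf (ha : ∀ n, |a n| ≤ C) (x : ℝ) :
    HasSum (fun n => a n / n ! * x ^ n) (egf a x) :=
  (summable_egf_term ha x).hasSum

lemma egf_sub (ha : ∀ n, |a n| ≤ C) (hb : ∀ n, |b n| ≤ D) :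
    egf (a - b) = egf a - egf b := by
  funext x
  refine HasSum.tsum_eq ?_
  simpa only [Pi.sub_apply, sub_div, sub_mul] using (hasSum_egf ha x).sub (hasSum_egf hb x)

lemma deriv_egf_term_succ (k : ℕ) (x : ℝ) :
    a (k + 1) / (k + 1)! * ((k + 1 : ℕ) * x ^ (k + 1 - 1)) = a (k + 1) / k ! * x ^ k := by
  rw [Nat.factorial_succ, Nat.add_sub_cancel]
  push_cast
  field_simp

lemma hasDerivAt_egf (ha : ∀ n, |a n| ≤ C) (x : ℝ) :
    HasDerivAt (egf a) (egf (fun n => a (n + 1)) x) x := by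
  set R := |x| + 1
  have hbound : ∀ n, ∀ y ∈ Metric.ball (0 : ℝ) R,
      ‖a n / n ! * (n * y ^ (n - 1))‖ ≤ C * (R ^ (n - 1) / (n - 1)!) := by
    -- at `n = 0` the right side is `C` (as `0 - 1 = 0` in `ℕ`) and the left side is `0`
    rintro (_ | k) y hy
    · simpa using (abs_nonneg _).trans (ha 0)
    · rw [deriv_egf_term_succ]
      exact norm_egf_term_le (fun n => ha (n + 1)) (mem_ball_zero_iff.1 hy).le k
  have hsum : HasSum (fun n => a n / n ! * (n * x ^ (n - 1))) (egf (fun n => a (n + 1)) x) := by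
    refine (hasSum_nat_add_iff' 1).1 ?_
    simpa only [deriv_egf_term_succ, Finset.range_one, Finset.sum_singleton, CharP.cast_eq_zero,
      zero_mul, mul_zero, sub_zero] using hasSum_egf (fun n => ha (n + 1)) x
  rw [← hsum.tsum_eq]
  refine hasDerivAt_tsum_of_isPreconnected (g := fun n y => a n / n ! * y ^ n)
    ((summable_nat_add_iff 1).1 ?_) Metric.isOpen_ball (convex_ball 0 R).isPreconnected
    (fun n y _ => (hasDerivAt_pow n y).const_mul _) hbound (Metric.mem_ball_self (by positivity))
    (summable_egf_term ha 0) (by simp [R])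
  simpa using (Real.summable_pow_div_factorial R).mul_left C

lemma deriv_egf (ha : ∀ n, |a n| ≤ C) : deriv (egf a) = egf fun n => a (n + 1) :=
  funext fun x => (hasDerivAt_egf ha x).deriv

lemma iterate_deriv_egf (ha : ∀ n, |a n| ≤ C) (m : ℕ) :
    deriv^[m] (egf a) = egf fun n => a (n + m) := by
  induction m with
  | zero => rfl
  | succ k ih =>
    rw [Function.iterate_succ_apply', ih, deriv_egf fun n => ha (n + k)]
    simp only [Nat.add_right_comm _ 1 k, Nat.add_assoc]

lemma contDiff_egf (ha : ∀ n, |a n| ≤ C) : ContDiff ℝ (⊤ : ℕ∞) (egf a) :=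
  contDiff_of_differentiable_iteratedDeriv fun m _ => by
    rw [iteratedDeriv_eq_iterate, iterate_deriv_egf ha]
    exact fun x => (hasDerivAt_egf (fun n => ha (n + m)) x).differentiableAt

lemma abs_egf_le_tail (ha : ∀ n, |a n| ≤ 1) {N : ℕ} (hN : ∀ n < N, a n = 0) {x R : ℝ}
    (hx : |x| ≤ R) : |egf a x| ≤ ∑' n, R ^ (n + N) / (n + N)! := by
  have hs := summable_egf_term ha x
  have hhead : ∑ n ∈ Finset.range N, a n / n ! * x ^ n = 0 :=
    Finset.sum_eq_zero fun n hn => by rw [hN n (Finset.mem_range.1 hn), zero_div, zero_mul]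
  rw [egf, ← hs.sum_add_tsum_nat_add N, hhead, zero_add, ← Real.norm_eq_abs]
  have htail : Summable fun n => ‖a (n + N) / (n + N)! * x ^ (n + N)‖ :=
    (summable_nat_add_iff N).2 hs.norm
  calc ‖∑' n, a (n + N) / (n + N)! * x ^ (n + N)‖
      ≤ ∑' n, ‖a (n + N) / (n + N)! * x ^ (n + N)‖ := norm_tsum_le_tsum_norm htail
    _ ≤ ∑' n, R ^ (n + N) / (n + N)! := by
      refine htail.tsum_le_tsum (fun n => ?_)
        ((summable_nat_add_iff N).2 (Real.summable_pow_div_factorial R))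
      simpa only [one_mul] using norm_egf_term_le ha hx (n + N)

lemma iterate_deriv_egf_mod (ha : ∀ n, |a n| ≤ C) (N : ℕ) :
    deriv^[N] (egf fun n => a (n % N)) = egf fun n => a (n % N) := by
  rw [iterate_deriv_egf fun n => ha _]
  simp only [Nat.add_mod_right]

lemma iterate_deriv_egf_append (ha : ∀ n, |a n| ≤ C) (hb : ∀ n, |b n| ≤ C) (N : ℕ) :
    deriv^[N] (egf fun n => if n < N then a n else b (n - N)) = egf b := by
  rw [iterate_deriv_egf fun n => by split_ifs; exacts [ha n, hb _]]
  simp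

end egf

lemma tendsto_tsum_pow_div_factorial_add (R : ℝ) :
    Tendsto (fun N => ∑' n, R ^ (n + N) / (n + N)!) atTop (𝓝 0) :=
  tendsto_sum_nat_add fun n => R ^ n / n !

lemma IsBinary.abs_le_one {a : ℕ → ℝ} (ha : IsBinary a) (n : ℕ) : |a n| ≤ 1 := by
  rcases ha n with h | h <;> simp [h]

lemma IsBinary.abs_sub_le_one {a b : ℕ → ℝ} (ha : IsBinary a) (hb : IsBinary b) (n : ℕ) :
    |(a - b) n| ≤ 1 := by
  rcases ha n with h | h <;> rcases hb n with h' | h' <;> simp [h, h']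

lemma mem_Esp_iff {f : ℝ → ℝ} : f ∈ Esp ↔ ∃ a, IsBinary a ∧ f = egf a := by
  constructor
  · rintro ⟨-, a, ha, hf⟩
    exact ⟨a, ha, funext fun x => (hf x).tsum_eq.symm⟩
  · rintro ⟨a, ha, rfl⟩
    exact ⟨contDiff_egf ha.abs_le_one, a, ha, hasSum_egf ha.abs_le_one⟩

lemma deriv_mem_Esp {f : ℝ → ℝ} (hf : f ∈ Esp) : deriv f ∈ Esp := by
  obtain ⟨a, ha, rfl⟩ := mem_Esp_iff.1 hf
  rw [deriv_egf ha.abs_le_one]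
  exact mem_Esp_iff.2 ⟨_, fun n => ha (n + 1), rfl⟩

lemma rho_le_of_forall_abs_sub_le {s t : ℝ} (p : ℝ≥0∞) {f g : ℝ → ℝ} {C : ℝ}
    (hC : 0 ≤ C) (h : ∀ x ∈ Icc s t, |f x - g x| ≤ C) :
    rho s t p f g ≤ (ENNReal.ofReal (t - s) ^ p.toReal⁻¹).toReal * C := by
  have hle := eLpNorm_le_of_ae_bound (p := p) (μ := volume.restrict (Icc s t))
    (f := fun x => f x - g x) ((ae_restrict_iff' measurableSet_Icc).2 (ae_of_all _ h))
  rw [Measure.restrict_apply_univ, Real.volume_Icc] at hle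
  have hfin : ENNReal.ofReal (t - s) ^ p.toReal⁻¹ * ENNReal.ofReal C ≠ ⊤ :=
    ENNReal.mul_ne_top (ENNReal.rpow_ne_top_of_nonneg (by positivity) ENNReal.ofReal_ne_top)
      ENNReal.ofReal_ne_top
  simpa only [rho, ENNReal.toReal_mul, ENNReal.toReal_ofReal hC] using
    ENNReal.toReal_mono hfin hle

lemma exists_forall_rho_egf_lt (s t : ℝ) (p : ℝ≥0∞) {ε : ℝ} (hε : 0 < ε) :
    ∃ N, ∀ a b, IsBinary a → IsBinary b → (∀ n < N, a n = b n) →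
      rho s t p (egf a) (egf b) < ε := by
  set M := (ENNReal.ofReal (t - s) ^ p.toReal⁻¹).toReal
  set R := max |s| |t|
  have hlim : Tendsto (fun N => M * ∑' n, R ^ (n + N) / (n + N)!) atTop (𝓝 0) := by
    simpa using (tendsto_tsum_pow_div_factorial_add R).const_mul M
  obtain ⟨N, hN⟩ := eventually_atTop.1 (hlim.eventually (gt_mem_nhds hε))
  refine ⟨N, fun a b ha hb hab => (rho_le_of_forall_abs_sub_le p ?_ fun x hx => ?_).trans_lt
    (hN N le_rfl)⟩
  · exact tsum_nonneg fun n => div_nonneg (pow_nonneg (by positivity) _) (by positivity)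
  · rw [← Pi.sub_apply (egf a), ← egf_sub ha.abs_le_one hb.abs_le_one]
    exact abs_egf_le_tail (ha.abs_sub_le_one hb) (fun n hn => sub_eq_zero.2 (hab n hn))
      (abs_le_max_abs_abs hx.1 hx.2)

theorem stmt1_general (γ : ℝ) (p : ℝ≥0∞) :
    (∀ f ∈ Esp, deriv f ∈ Esp) ∧
    (∀ f ∈ Esp, ∀ ε > (0 : ℝ), ∃ g ∈ Esp,
      (∃ m : ℕ, 1 ≤ m ∧ Set.EqOn (deriv^[m] g) g (Icc 0 γ)) ∧ rho 0 γ p f g < ε) ∧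
    (∀ f ∈ Esp, ∀ g ∈ Esp, ∀ ε > (0 : ℝ), ∃ h ∈ Esp, ∃ n : ℕ,
      rho 0 γ p f h < ε ∧ rho 0 γ p (deriv^[n] h) g < ε) := by
  refine ⟨fun f => deriv_mem_Esp, ?_, ?_⟩
  · rintro _ hf ε hε
    obtain ⟨a, ha, rfl⟩ := mem_Esp_iff.1 hf
    obtain ⟨N, hN⟩ := exists_forall_rho_egf_lt 0 γ p hε
    set b : ℕ → ℝ := fun n => a (n % (N + 1))
    have hb : IsBinary b := fun n => ha _
    have hper : deriv^[N + 1] (egf b) = egf b := iterate_deriv_egf_mod ha.abs_le_one _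
    refine ⟨egf b, mem_Esp_iff.2 ⟨b, hb, rfl⟩,
      ⟨N + 1, N.succ_pos, fun x _ => congrFun hper x⟩, hN a b ha hb fun n hn => ?_⟩
    simp only [b, Nat.mod_eq_of_lt (n.lt_succ_of_lt hn)]
  · rintro _ hf _ hg ε hε
    obtain ⟨a, ha, rfl⟩ := mem_Esp_iff.1 hf
    obtain ⟨b, hb, rfl⟩ := mem_Esp_iff.1 hg
    obtain ⟨N, hN⟩ := exists_forall_rho_egf_lt 0 γ p hε
    set c : ℕ → ℝ := fun n => if n < N then a n else b (n - N)
    have hc : IsBinary c := fun n => by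
      simp only [c]
      split_ifs
      exacts [ha n, hb _]
    have hshift : deriv^[N] (egf c) = egf b :=
      iterate_deriv_egf_append ha.abs_le_one hb.abs_le_one N
    refine ⟨egf c, mem_Esp_iff.2 ⟨c, hc, rfl⟩, N, hN a c ha hc fun n hn => ?_, ?_⟩
    · simp [c, hn]
    · simpa [hshift, rho] using hε

/-- Fix `γ > 0` and `1 ≤ p ≤ ∞`. The set `E` is invariant under `d/dx`,
and `d/dx` is Devaney chaotic on `(E, ρ_p)`: its periodic points are dense in `(E, ρ_p)`,
and it is topologically transitive on `(E, ρ_p)` (expressed in the equivalent ε-form for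
metric spaces). -/
theorem stmt1 (γ : ℝ) (hγ : 0 < γ) (p : ℝ≥0∞) (hp : 1 ≤ p) :
    (∀ f ∈ Esp, deriv f ∈ Esp) ∧
    (∀ f ∈ Esp, ∀ ε > (0 : ℝ), ∃ g ∈ Esp,
      (∃ m : ℕ, 1 ≤ m ∧ Set.EqOn (deriv^[m] g) g (Icc 0 γ)) ∧ rho 0 γ p f g < ε) ∧
    (∀ f ∈ Esp, ∀ g ∈ Esp, ∀ ε > (0 : ℝ), ∃ h ∈ Esp, ∃ n : ℕ,
      rho 0 γ p f h < ε ∧ rho 0 γ p (deriv^[n] h) g < ε) :=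
  stmt1_general γ p
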